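/- Let Λ ⊂ {1,…,N}, let x̃ ∈ ℝ^N with supp(x̃) ∩ Λ = ∅, let T ⊆ {1,…,N} with T ∩ (supp(x̃) ∪ Λ) = ∅, and set h = A_Λᵀ A_Λ x̃. If the M×N real matrix Φ satisfies the RIP of order |T ∪ supp(x̃)| + |Λ| with isometry constant δ, then ‖h|_T‖₂ = ‖h|_T − x̃|_T‖₂ ≤ (δ/(1−δ))‖x̃‖₂. -/

import Mathlib

/-!
Write `A_Λ x̃ = Φ x̃ - Φ w`, where `Φ w` is the projection of `Φ x̃` onto the columns in `Λ`,
so `supp w ⊆ Λ`. Since `A_Λ x̃ ⊥ Φ w`, `‖Φ w‖² = ⟨Φ w, Φ x̃⟩`; together with the lower RIP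
bound and the RIP near-orthogonality `|⟨Φ u, Φ v⟩| ≤ δ ‖u‖ ‖v‖` of disjointly supported
vectors this gives `‖w‖ ≤ δ/(1-δ) ‖x̃‖`. For `u = h|_T`,
`‖u‖² = ⟨u, h⟩ = ⟨A_Λ u, A_Λ x̃⟩ = ⟨Φ u, Φ x̃⟩ - ⟨Φ u, Φ w⟩ ≤ δ ‖u‖ (‖x̃‖ + ‖w‖)`,
which is at most `δ/(1-δ) ‖u‖ ‖x̃‖`.
-/

noncomputable section

namespace OMP

open Matrix Finset

/-- The support of a vector, as a `Finset`. -/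
def supp {n : ℕ} (x : Fin n → ℝ) : Finset (Fin n) :=
  Finset.univ.filter fun j => x j ≠ 0

/-- The Euclidean (ℓ²) norm of a vector. -/
def l2 {n : ℕ} (x : Fin n → ℝ) : ℝ := Real.sqrt (∑ j, x j ^ 2)

/-- The ℓ^∞ norm of a vector. -/
def linf {n : ℕ} (x : Fin n → ℝ) : ℝ := ⨆ j, |x j|

/-- The standard inner product of two vectors. -/
def dotp {n : ℕ} (x y : Fin n → ℝ) : ℝ := ∑ j, x j * y j

/-- The restriction of a vector to a set of indices (zero elsewhere). -/
def restr {n : ℕ} (Γ : Finset (Fin n)) (x : Fin n → ℝ) : Fin n → ℝ :=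
  fun j => if j ∈ Γ then x j else 0

/-- The restricted isometry property of order `K` with isometry constant `δ`. -/
def RIP {M N : ℕ} (K : ℕ) (Φ : Matrix (Fin M) (Fin N) ℝ) (δ : ℝ) : Prop :=
  0 < δ ∧ δ < 1 ∧ ∀ x : Fin N → ℝ, (supp x).card ≤ K →
    (1 - δ) * l2 x ^ 2 ≤ l2 (Φ.mulVec x) ^ 2 ∧
      l2 (Φ.mulVec x) ^ 2 ≤ (1 + δ) * l2 x ^ 2

/-- The span of the columns of `Φ` indexed by `Λ`, as a submodule of Euclidean space. -/
def colSpan {M N : ℕ} (Φ : Matrix (Fin M) (Fin N) ℝ) (Λ : Finset (Fin N)) :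
    Submodule ℝ (EuclideanSpace ℝ (Fin M)) :=
  Submodule.span ℝ ((fun j => (WithLp.equiv 2 (Fin M → ℝ)).symm fun i => Φ i j) '' (Λ : Set (Fin N)))

/-- Orthogonal projection `P_Λ` onto the span of the columns of `Φ` indexed by `Λ`. -/
def projCol {M N : ℕ} (Φ : Matrix (Fin M) (Fin N) ℝ) (Λ : Finset (Fin N))
    (v : Fin M → ℝ) : Fin M → ℝ :=
  WithLp.equiv 2 (Fin M → ℝ)
    (Submodule.orthogonalProjection (colSpan Φ Λ) ((WithLp.equiv 2 (Fin M → ℝ)).symm v) : EuclideanSpace ℝ (Fin M))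

/-- The matrix `A_Λ = (I - P_Λ) Φ`: the columns of `Φ` orthogonalized against `colSpan Φ Λ`. -/
def Amat {M N : ℕ} (Φ : Matrix (Fin M) (Fin N) ℝ) (Λ : Finset (Fin N)) :
    Matrix (Fin M) (Fin N) ℝ :=
  Matrix.of fun i j => Φ i j - projCol Φ Λ (fun i' => Φ i' j) i

variable {n M N : ℕ}

lemma l2_sq (x : Fin n → ℝ) : l2 x ^ 2 = x ⬝ᵥ x := by
  rw [l2, Real.sq_sqrt (by positivity)]
  simp only [dotProduct, sq]

lemma l2_eq_norm (x : Fin n → ℝ) : l2 x = ‖WithLp.toLp 2 x‖ := by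
  simp [l2, EuclideanSpace.norm_eq]

lemma l2_nonneg (x : Fin n → ℝ) : 0 ≤ l2 x := Real.sqrt_nonneg _

lemma l2_eq_zero {x : Fin n → ℝ} : l2 x = 0 ↔ x = 0 := by
  rw [l2_eq_norm, norm_eq_zero, WithLp.toLp_eq_zero]

lemma supp_subset_iff {x : Fin n → ℝ} {S : Finset (Fin n)} :
    supp x ⊆ S ↔ ∀ j ∉ S, x j = 0 := by
  simp only [supp, subset_iff, mem_filter, mem_univ, true_and]
  exact ⟨fun h j hj => by_contra fun hx => hj (h hx),
    fun h j hx => by_contra fun hj => hx (h j hj)⟩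

lemma supp_restr_subset (Γ : Finset (Fin n)) (x : Fin n → ℝ) : supp (restr Γ x) ⊆ Γ :=
  supp_subset_iff.2 fun _ hj => if_neg hj

lemma supp_add_subset (x y : Fin n → ℝ) : supp (x + y) ⊆ supp x ∪ supp y := by
  intro j
  simp only [supp, mem_union, mem_filter, mem_univ, true_and, Pi.add_apply]
  contrapose!
  rintro ⟨hx, hy⟩
  simp [hx, hy]

lemma supp_smul_subset (c : ℝ) (x : Fin n → ℝ) : supp (c • x) ⊆ supp x := by
  intro j
  simp only [supp, mem_filter, mem_univ, true_and, Pi.smul_apply, smul_eq_mul]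
  exact right_ne_zero_of_mul

lemma dotProduct_eq_zero_of_disjoint {x y : Fin n → ℝ} (h : Disjoint (supp x) (supp y)) :
    x ⬝ᵥ y = 0 := by
  refine sum_eq_zero fun j _ => ?_
  by_cases hx : x j = 0
  · simp [hx]
  · have : y j = 0 := by
      by_contra hy
      exact disjoint_left.1 h (by simpa [supp] using hx) (by simpa [supp] using hy)
    simp [this]

lemma restr_dotProduct_self (Γ : Finset (Fin n)) (x : Fin n → ℝ) :
    restr Γ x ⬝ᵥ restr Γ x = restr Γ x ⬝ᵥ x :=
  sum_congr rfl fun j _ => by by_cases hj : j ∈ Γ <;> simp [restr, hj]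

lemma restr_sub_of_disjoint {Γ : Finset (Fin n)} (x : Fin n → ℝ) {y : Fin n → ℝ}
    (hy : Disjoint Γ (supp y)) : restr Γ (x - y) = restr Γ x := by
  funext j
  by_cases hj : j ∈ Γ
  · have hyj : y j = 0 := by simpa [supp] using disjoint_left.1 hy hj
    simp [restr, hj, hyj]
  · simp [restr, hj]

lemma le_of_sq_le_mul {a b : ℝ} (ha : 0 ≤ a) (hb : 0 ≤ b) (h : a ^ 2 ≤ a * b) : a ≤ b := by
  rcases ha.eq_or_lt with rfl | ha
  · exact hb
  · exact le_of_mul_le_mul_left (by rwa [← sq]) ha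

lemma sum_smul_col_eq_mulVec (Φ : Matrix (Fin M) (Fin N) ℝ) {Λ : Finset (Fin N)}
    {w : Fin N → ℝ} (hw : supp w ⊆ Λ) :
    ∑ j ∈ Λ, w j • WithLp.toLp 2 (fun i => Φ i j) = WithLp.toLp 2 (Φ *ᵥ w) := by
  ext i
  simp only [WithLp.ofLp_sum, WithLp.ofLp_smul, Finset.sum_apply, Pi.smul_apply, smul_eq_mul,
    mulVec, dotProduct]
  rw [sum_subset (subset_univ Λ) fun j _ hj => by simp [supp_subset_iff.1 hw j hj]]
  exact sum_congr rfl fun j _ => mul_comm _ _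

lemma mem_colSpan_iff (Φ : Matrix (Fin M) (Fin N) ℝ) (Λ : Finset (Fin N)) (v : Fin M → ℝ) :
    WithLp.toLp 2 v ∈ colSpan Φ Λ ↔ ∃ w, supp w ⊆ Λ ∧ Φ *ᵥ w = v := by
  rw [colSpan, Submodule.mem_span_image_finset_iff_exists_fun']
  constructor
  · rintro ⟨c, hc⟩
    refine ⟨restr Λ c, supp_restr_subset Λ c, WithLp.toLp_injective 2 ?_⟩
    rw [← sum_smul_col_eq_mulVec Φ (supp_restr_subset Λ c), ← hc]
    exact sum_congr rfl fun j hj => by simp [restr, hj]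
  · rintro ⟨w, hw, rfl⟩
    exact ⟨w, sum_smul_col_eq_mulVec Φ hw⟩

section Projection

variable (Φ : Matrix (Fin M) (Fin N) ℝ) (Λ : Finset (Fin N))

lemma toLp_projCol (v : Fin M → ℝ) :
    WithLp.toLp 2 (projCol Φ Λ v) = (colSpan Φ Λ).starProjection (WithLp.toLp 2 v) := rfl

lemma projCol_mem_colSpan (v : Fin M → ℝ) : WithLp.toLp 2 (projCol Φ Λ v) ∈ colSpan Φ Λ := by
  rw [toLp_projCol]
  exact Submodule.starProjection_apply_mem _ _

lemma sub_projCol_dotProduct_eq_zero (v : Fin M → ℝ) {u : Fin M → ℝ}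
    (hu : WithLp.toLp 2 u ∈ colSpan Φ Λ) : (v - projCol Φ Λ v) ⬝ᵥ u = 0 := by
  have h := (Submodule.mem_orthogonal' _ _).1
    ((colSpan Φ Λ).sub_starProjection_mem_orthogonal (WithLp.toLp 2 v)) _ hu
  rw [← toLp_projCol, ← WithLp.toLp_sub, EuclideanSpace.inner_eq_star_dotProduct] at h
  simpa [dotProduct_comm] using h

lemma amat_mulVec (x : Fin N → ℝ) : Amat Φ Λ *ᵥ x = Φ *ᵥ x - projCol Φ Λ (Φ *ᵥ x) := by
  apply WithLp.toLp_injective 2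
  rw [WithLp.toLp_sub, toLp_projCol, ← sum_smul_col_eq_mulVec (Amat Φ Λ) (subset_univ _),
    ← sum_smul_col_eq_mulVec Φ (subset_univ _), map_sum, ← sum_sub_distrib]
  refine sum_congr rfl fun j _ => ?_
  rw [map_smul, ← toLp_projCol, ← smul_sub, ← WithLp.toLp_sub]
  rfl

lemma amat_mulVec_dotProduct_mulVec_eq_zero (x : Fin N → ℝ) {y : Fin N → ℝ}
    (hy : supp y ⊆ Λ) :
    (Amat Φ Λ *ᵥ x) ⬝ᵥ (Φ *ᵥ y) = 0 := by
  rw [amat_mulVec]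
  exact sub_projCol_dotProduct_eq_zero Φ Λ _ ((mem_colSpan_iff Φ Λ _).2 ⟨y, hy, rfl⟩)

lemma exists_amat_mulVec_eq (x : Fin N → ℝ) :
    ∃ w, supp w ⊆ Λ ∧ Amat Φ Λ *ᵥ x = Φ *ᵥ x - Φ *ᵥ w := by
  obtain ⟨w, hw, hΦw⟩ := (mem_colSpan_iff Φ Λ _).1 (projCol_mem_colSpan Φ Λ (Φ *ᵥ x))
  exact ⟨w, hw, by rw [amat_mulVec, hΦw]⟩

lemma amat_mulVec_dotProduct_amat_mulVec (u x : Fin N → ℝ) :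
    (Amat Φ Λ *ᵥ u) ⬝ᵥ (Amat Φ Λ *ᵥ x) = (Φ *ᵥ u) ⬝ᵥ (Amat Φ Λ *ᵥ x) := by
  obtain ⟨w, hw, hu⟩ := exists_amat_mulVec_eq Φ Λ u
  rw [hu, sub_dotProduct, dotProduct_comm (Φ *ᵥ w),
    amat_mulVec_dotProduct_mulVec_eq_zero Φ Λ x hw, sub_zero]

end Projection

namespace RIP

variable {K : ℕ} {Φ : Matrix (Fin M) (Fin N) ℝ} {δ : ℝ}

lemma div_one_sub_nonneg (hΦ : RIP K Φ δ) : 0 ≤ δ / (1 - δ) :=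
  div_nonneg hΦ.1.le (sub_nonneg.2 hΦ.2.1.le)

lemma abs_dotProduct_mulVec_le (hΦ : RIP K Φ δ) {u v : Fin N → ℝ}
    (huv : Disjoint (supp u) (supp v)) (hK : (supp u ∪ supp v).card ≤ K) :
    |(Φ *ᵥ u) ⬝ᵥ (Φ *ᵥ v)| ≤ δ * l2 u * l2 v := by
  rcases eq_or_ne u 0 with rfl | hu
  · simp [l2]
  rcases eq_or_ne v 0 with rfl | hv
  · simp [l2]
  have hpos : 0 < l2 u * l2 v :=
    mul_pos ((l2_nonneg u).lt_of_ne' (l2_eq_zero.not.2 hu))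
      ((l2_nonneg v).lt_of_ne' (l2_eq_zero.not.2 hv))
  set p := Φ *ᵥ u with hp
  set q := Φ *ᵥ v with hq
  have hRIP : ∀ a b : ℝ,
      (1 - δ) * (a ^ 2 * l2 u ^ 2 + b ^ 2 * l2 v ^ 2) ≤
          a ^ 2 * (p ⬝ᵥ p) + 2 * a * b * (p ⬝ᵥ q) + b ^ 2 * (q ⬝ᵥ q) ∧
        a ^ 2 * (p ⬝ᵥ p) + 2 * a * b * (p ⬝ᵥ q) + b ^ 2 * (q ⬝ᵥ q) ≤
          (1 + δ) * (a ^ 2 * l2 u ^ 2 + b ^ 2 * l2 v ^ 2) := by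
    intro a b
    have hsupp : (supp (a • u + b • v)).card ≤ K :=
      (card_le_card ((supp_add_subset _ _).trans
        (union_subset_union (supp_smul_subset _ _) (supp_smul_subset _ _)))).trans hK
    have hx : l2 (a • u + b • v) ^ 2 = a ^ 2 * l2 u ^ 2 + b ^ 2 * l2 v ^ 2 := by
      simp only [l2_sq, add_dotProduct, dotProduct_add, smul_dotProduct, dotProduct_smul,
        dotProduct_eq_zero_of_disjoint huv, dotProduct_eq_zero_of_disjoint huv.symm, smul_eq_mul]
      ring
    have hΦx : l2 (Φ *ᵥ (a • u + b • v)) ^ 2 =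
        a ^ 2 * (p ⬝ᵥ p) + 2 * a * b * (p ⬝ᵥ q) + b ^ 2 * (q ⬝ᵥ q) := by
      simp only [l2_sq, mulVec_add, mulVec_smul, add_dotProduct, dotProduct_add, smul_dotProduct,
        dotProduct_smul, smul_eq_mul, ← hp, ← hq, dotProduct_comm q p]
      ring
    rw [← hx, ← hΦx]
    exact hΦ.2.2 _ hsupp
  -- `‖v‖ u ± ‖u‖ v` both have squared norm `2 ‖u‖² ‖v‖²`
  obtain ⟨hplus_lo, hplus_hi⟩ := hRIP (l2 v) (l2 u)
  obtain ⟨hminus_lo, hminus_hi⟩ := hRIP (l2 v) (-l2 u)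
  rw [abs_le]
  constructor
  · refine le_of_mul_le_mul_left ?_ hpos
    linarith
  · refine le_of_mul_le_mul_left ?_ hpos
    linarith

lemma l2_le_of_amat_mulVec_eq (hΦ : RIP K Φ δ) {Λ : Finset (Fin N)} {x w : Fin N → ℝ}
    (hw : supp w ⊆ Λ) (hAx : Amat Φ Λ *ᵥ x = Φ *ᵥ x - Φ *ᵥ w)
    (hxΛ : Disjoint (supp x) Λ) (hK : (supp x ∪ Λ).card ≤ K) :
    l2 w ≤ δ / (1 - δ) * l2 x := by
  have hΦw : (Φ *ᵥ w) ⬝ᵥ (Φ *ᵥ w) = (Φ *ᵥ w) ⬝ᵥ (Φ *ᵥ x) := by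
    have h := amat_mulVec_dotProduct_mulVec_eq_zero Φ Λ x hw
    rw [hAx, sub_dotProduct, dotProduct_comm (Φ *ᵥ x)] at h
    linarith
  have hlow : (1 - δ) * l2 w ^ 2 ≤ (Φ *ᵥ w) ⬝ᵥ (Φ *ᵥ w) := by
    rw [← l2_sq]
    exact (hΦ.2.2 w ((card_le_card (hw.trans subset_union_right)).trans hK)).1
  have hcross : (Φ *ᵥ w) ⬝ᵥ (Φ *ᵥ x) ≤ δ * l2 w * l2 x :=
    (le_abs_self _).trans (abs_dotProduct_mulVec_le hΦ
      (hxΛ.symm.mono_left hw) ((card_le_card (by rw [union_comm]; gcongr)).trans hK))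
  refine le_of_sq_le_mul (l2_nonneg w) (mul_nonneg hΦ.div_one_sub_nonneg (l2_nonneg x)) ?_
  have hδ1 : 0 < 1 - δ := by linarith [hΦ.2.1]
  rw [show l2 w * (δ / (1 - δ) * l2 x) = δ * l2 w * l2 x / (1 - δ) by ring, le_div_iff₀ hδ1]
  linarith

lemma amat_mulVec_dotProduct_le (hΦ : RIP K Φ δ) {Λ : Finset (Fin N)} {u x : Fin N → ℝ}
    (hux : Disjoint (supp u) (supp x)) (hΛ : Disjoint (supp u ∪ supp x) Λ)
    (hK : (supp u ∪ supp x).card + Λ.card ≤ K) :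
    (Amat Φ Λ *ᵥ u) ⬝ᵥ (Amat Φ Λ *ᵥ x) ≤ δ / (1 - δ) * l2 u * l2 x := by
  obtain ⟨w, hw, hAx⟩ := exists_amat_mulVec_eq Φ Λ x
  rw [disjoint_union_left] at hΛ
  have hcard {S : Finset (Fin N)} (hS : S ⊆ supp u ∪ supp x ∪ Λ) : S.card ≤ K :=
    (card_le_card hS).trans ((card_union_le _ _).trans hK)
  have hwx : l2 w ≤ δ / (1 - δ) * l2 x :=
    hΦ.l2_le_of_amat_mulVec_eq hw hAx hΛ.2 (hcard (by gcongr; exact subset_union_right))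
  have hΦux := hΦ.abs_dotProduct_mulVec_le hux (hcard subset_union_left)
  have hΦuw := hΦ.abs_dotProduct_mulVec_le (hΛ.1.mono_right hw)
    (hcard (union_subset_union subset_union_left hw))
  have hδ1 : 0 < 1 - δ := by linarith [hΦ.2.1]
  calc (Amat Φ Λ *ᵥ u) ⬝ᵥ (Amat Φ Λ *ᵥ x)
      = (Φ *ᵥ u) ⬝ᵥ (Φ *ᵥ x) - (Φ *ᵥ u) ⬝ᵥ (Φ *ᵥ w) := by
        rw [amat_mulVec_dotProduct_amat_mulVec, hAx, dotProduct_sub]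
    _ ≤ δ * l2 u * l2 x + δ * l2 u * l2 w := by
        linarith [le_abs_self ((Φ *ᵥ u) ⬝ᵥ (Φ *ᵥ x)), neg_abs_le ((Φ *ᵥ u) ⬝ᵥ (Φ *ᵥ w))]
    _ ≤ δ * l2 u * l2 x + δ * l2 u * (δ / (1 - δ) * l2 x) := by
        have := hΦ.1.le; have := l2_nonneg u; gcongr
    _ = δ / (1 - δ) * l2 u * l2 x := by
        field_simp
        ring

end RIP

/-- upper bound on the energy of `h = A_Λᵀ A_Λ x̃` off the support of `x̃`. -/
theorem stmt14 {M N : ℕ} (Φ : Matrix (Fin M) (Fin N) ℝ) (δ : ℝ) (Λ : Finset (Fin N))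
    (xt : Fin N → ℝ) (hdisj : supp xt ∩ Λ = ∅)
    (T : Finset (Fin N)) (hT : T ∩ (supp xt ∪ Λ) = ∅)
    (hRIP : RIP ((T ∪ supp xt).card + Λ.card) Φ δ)
    (h : Fin N → ℝ) (hh : h = (Amat Φ Λ)ᵀ.mulVec ((Amat Φ Λ).mulVec xt)) :
    l2 (restr T h) = l2 (restr T (h - xt)) ∧ l2 (restr T h) ≤ δ / (1 - δ) * l2 xt := by
  rw [← disjoint_iff_inter_eq_empty, disjoint_union_right] at hT
  rw [← disjoint_iff_inter_eq_empty] at hdisj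
  refine ⟨by rw [restr_sub_of_disjoint h hT.1], ?_⟩
  set u := restr T h
  have hu : supp u ⊆ T := supp_restr_subset T h
  have hsq : l2 u ^ 2 = (Amat Φ Λ *ᵥ u) ⬝ᵥ (Amat Φ Λ *ᵥ xt) :=
    calc l2 u ^ 2 = u ⬝ᵥ h := by rw [l2_sq, restr_dotProduct_self]
      _ = _ := by rw [hh, dotProduct_mulVec, vecMul_transpose, dotProduct_comm]
  have hbound := hRIP.amat_mulVec_dotProduct_le (hT.1.mono_left hu)
    (disjoint_union_left.2 ⟨hT.2.mono_left hu, hdisj⟩) (by gcongr)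
  refine le_of_sq_le_mul (l2_nonneg u) (mul_nonneg hRIP.div_one_sub_nonneg (l2_nonneg xt)) ?_
  linarith

end OMP
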